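/- Let d ≥ 1 and let n be divisible by d+1. For every d-regular finite simple graph G on n vertices: (i) for every integer k with 1 ≤ k ≤ n/(d+1), one has i_{k+1}(G)·i_k(CL_{d,n}) ≥ i_{k+1}(CL_{d,n})·i_k(G) (i.e. the expected free volume (k+1)·i_{k+1}/i_k is minimized by CL_{d,n}); and (ii) for every integer k ≥ 0, i_k(G) ≥ i_k(CL_{d,n}). -/

import Mathlib

open Finset
open scoped Classical

variable {V : Type} [Fintype V] [DecidableEq V]

/-- `M` is a matching of `G`: a finite set of edges of `G` that are pairwise vertex-disjoint. -/
def IsMatchingFinset (G : SimpleGraph V) (M : Finset (Sym2 V)) : Prop :=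
  (∀ e ∈ M, e ∈ G.edgeSet) ∧
    ∀ e ∈ M, ∀ f ∈ M, e ≠ f → ∀ v : V, v ∈ e → v ∉ f

/-- `I` is an independent set of `G`: a finite set of pairwise non-adjacent vertices. -/
def IsIndepFinset (G : SimpleGraph V) (I : Finset V) : Prop :=
  ∀ u ∈ I, ∀ v ∈ I, ¬ G.Adj u v

/-- `G` is `d`-regular: every vertex has exactly `d` neighbors. -/
def IsRegularGraph (G : SimpleGraph V) (d : ℕ) : Prop :=
  ∀ v : V, (Finset.univ.filter fun w => G.Adj v w).card = d

/-- The matching polynomial (monomer-dimer partition function) of `G` at fugacity `lam`. -/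
noncomputable def Zmatch (G : SimpleGraph V) (lam : ℝ) : ℝ :=
  ∑ M ∈ Finset.univ.filter (fun M : Finset (Sym2 V) => IsMatchingFinset G M), lam ^ M.card

/-- The independence polynomial (hard-core partition function) of `G` at fugacity `lam`. -/
noncomputable def Zind (G : SimpleGraph V) (lam : ℝ) : ℝ :=
  ∑ I ∈ Finset.univ.filter (fun I : Finset V => IsIndepFinset G I), lam ^ I.card

/-- `m_k(G)`: the number of matchings of size `k` in `G`. -/
noncomputable def matchCount (G : SimpleGraph V) (k : ℕ) : ℕ :=
  (Finset.univ.filter fun M : Finset (Sym2 V) => IsMatchingFinset G M ∧ M.card = k).card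

/-- `i_k(G)`: the number of independent sets of size `k` in `G`. -/
noncomputable def indepCount (G : SimpleGraph V) (k : ℕ) : ℕ :=
  (Finset.univ.filter fun I : Finset V => IsIndepFinset G I ∧ I.card = k).card

/-- The number of monochromatic edges of `G` under the coloring `χ`. -/
noncomputable def monoCount (G : SimpleGraph V) {q : ℕ} (χ : V → Fin q) : ℕ :=
  (Finset.univ.filter fun e : Sym2 V =>
    e ∈ G.edgeSet ∧ ∀ v ∈ e, ∀ w ∈ e, χ v = χ w).card

/-- `c^q_k(G)`: the number of `q`-colorings of `G` with exactly `k` monochromatic edges. -/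
noncomputable def colCount (G : SimpleGraph V) (q k : ℕ) : ℕ :=
  (Finset.univ.filter fun χ : V → Fin q => monoCount G χ = k).card

/-- The disjoint union of `m` copies of the graph `H`. -/
def copies (m : ℕ) {W : Type} (H : SimpleGraph W) : SimpleGraph (Fin m × W) where
  Adj a b := a.1 = b.1 ∧ H.Adj a.2 b.2
  symm := ⟨fun a b h => ⟨h.1.symm, h.2.symm⟩⟩
  loopless := ⟨fun a h => H.irrefl h.2⟩

/-- `H_{d,n}` for `n = 2dm`: the disjoint union of `m` copies of `K_{d,d}`. -/
def Hgraph (d m : ℕ) : SimpleGraph (Fin m × (Fin d ⊕ Fin d)) :=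
  copies m (completeBipartiteGraph (Fin d) (Fin d))

/-- `CL_{d,n}` for `n = (d+1)m`: the disjoint union of `m` copies of the complete graph
`K_{d+1}`. -/
def CLgraph (d m : ℕ) : SimpleGraph (Fin m × Fin (d + 1)) :=
  copies m (⊤ : SimpleGraph (Fin (d + 1)))

/-! Count the pairs `(I, v)` with `I` an independent `k`-set and `v` a free vertex of `I`: each
independent `(k+1)`-set arises from exactly `k + 1` of them, so there are `(k+1)·i_{k+1}`. In a
`d`-regular graph a vertex of `I` blocks at most `d + 1` vertices, so `I` has at least
`n - k(d+1)` free vertices, with equality in `CL_{d,n}`, where the closed neighbourhoods of the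
vertices of `I` are disjoint cliques. Hence `i_k(CL)` satisfies the recurrence
`(k+1)·a_{k+1} = (m-k)(d+1)·a_k` with `m = n / (d+1)`, while `i_k(G)` satisfies the corresponding
inequality `≥`, and both claims follow by comparing the two sequences term by term. -/

theorem le_of_succ_mul_eq_of_le_succ_mul {a b c : ℕ → ℕ}
    (ha : ∀ k, (k + 1) * a (k + 1) = c k * a k) (hb : ∀ k, c k * b k ≤ (k + 1) * b (k + 1))
    (h₀ : a 0 ≤ b 0) : ∀ k, a k ≤ b k
  | 0 => h₀
  | k + 1 => Nat.le_of_mul_le_mul_left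
      (calc (k + 1) * a (k + 1) = c k * a k := ha k
        _ ≤ c k * b k := Nat.mul_le_mul_left _ (le_of_succ_mul_eq_of_le_succ_mul ha hb h₀ k)
        _ ≤ (k + 1) * b (k + 1) := hb k)
      k.succ_pos

theorem mul_le_mul_of_succ_mul_eq_of_le_succ_mul {a b c : ℕ → ℕ}
    (ha : ∀ k, (k + 1) * a (k + 1) = c k * a k) (hb : ∀ k, c k * b k ≤ (k + 1) * b (k + 1))
    (k : ℕ) : a (k + 1) * b k ≤ b (k + 1) * a k :=
  Nat.le_of_mul_le_mul_left
    (calc (k + 1) * (a (k + 1) * b k) = a k * (c k * b k) := by rw [← mul_assoc, ha]; ring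
      _ ≤ a k * ((k + 1) * b (k + 1)) := Nat.mul_le_mul_left _ (hb k)
      _ = (k + 1) * (b (k + 1) * a k) := by ring)
    k.succ_pos

namespace SimpleGraph

variable {V : Type} (G : SimpleGraph V)

theorem isIndepFinset_iff_isIndepSet {I : Finset V} :
    IsIndepFinset G I ↔ G.IsIndepSet (I : Set V) :=
  ⟨fun h _ hu _ hv _ => h _ hu _ hv, fun h _ hu _ hv huv => h hu hv (G.ne_of_adj huv) huv⟩

theorem isIndepSet_insert_of_notMem {I : Set V} {v : V} (hv : v ∉ I) :
    G.IsIndepSet (insert v I) ↔ G.IsIndepSet I ∧ ∀ u ∈ I, ¬G.Adj u v := by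
  simp only [IsIndepSet, Set.pairwise_insert_of_notMem hv, G.adj_comm v, and_self]

variable [Fintype V]

theorem _root_.IsRegularGraph.isRegularOfDegree {d : ℕ} (hG : IsRegularGraph G d) :
    G.IsRegularOfDegree d := fun v => by
  rw [← hG v, ← card_neighborFinset_eq_degree, neighborFinset_eq_filter]

theorem indepCount_zero : indepCount G 0 = 1 := by
  rw [indepCount, card_eq_one]
  exact ⟨∅, by ext I; simp +contextual [IsIndepFinset]⟩

noncomputable def freeVolume (I : Finset V) : Finset V :=
  {v | v ∉ I ∧ ∀ u ∈ I, ¬G.Adj u v}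

theorem mem_freeVolume {I : Finset V} {v : V} :
    v ∈ G.freeVolume I ↔ v ∉ I ∧ ∀ u ∈ I, ¬G.Adj u v := by
  simp [freeVolume]

variable [DecidableEq V] [DecidableRel G.Adj]

theorem indepCount_eq_card_indepSetFinset (k : ℕ) : indepCount G k = #(G.indepSetFinset k) := by
  simp only [indepCount, indepSetFinset, isNIndepSet_iff, isIndepFinset_iff_isIndepSet]

theorem compl_freeVolume (I : Finset V) :
    (G.freeVolume I)ᶜ = I.biUnion fun u => insert u (G.neighborFinset u) := by
  ext v
  simp only [mem_compl, mem_freeVolume, mem_biUnion, mem_insert, mem_neighborFinset]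
  grind

theorem card_freeVolume (I : Finset V) :
    #(G.freeVolume I) = Fintype.card V - #(I.biUnion fun u => insert u (G.neighborFinset u)) := by
  rw [← compl_freeVolume, card_compl, Nat.sub_sub_self (card_le_univ _)]

theorem filter_indepSetFinset_subset {k : ℕ} {J : Finset V} (hJ : G.IsIndepSet (J : Set V)) :
    {I ∈ G.indepSetFinset k | I ⊆ J} = J.powersetCard k := by
  ext I
  simp only [mem_filter, mem_indepSetFinset_iff, isNIndepSet_iff, mem_powersetCard]
  exact ⟨fun h => ⟨h.2, h.1.2⟩, fun h => ⟨⟨hJ.mono (coe_subset.2 h.1), h.2⟩, h.1⟩⟩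

theorem card_filter_indepSetFinset_supset {k : ℕ} {I : Finset V} (hI : G.IsNIndepSet k I) :
    #{J ∈ G.indepSetFinset (k + 1) | I ⊆ J} = #(G.freeVolume I) := by
  symm
  refine card_bij (fun v _ => insert v I) (fun v hv => ?_) (fun v hv w hw h => ?_) (fun J hJ => ?_)
  · rw [mem_freeVolume] at hv
    simp only [mem_filter, mem_indepSetFinset_iff, isNIndepSet_iff, coe_insert,
      isIndepSet_insert_of_notMem _ (mem_coe.not.2 hv.1), card_insert_of_notMem hv.1, hI.card_eq]
    exact ⟨⟨⟨hI.isIndepSet, hv.2⟩, trivial⟩, subset_insert _ _⟩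
  · exact (mem_insert.1 (h ▸ mem_insert_self v I)).resolve_right ((G.mem_freeVolume).1 hv).1
  · simp only [mem_filter, mem_indepSetFinset_iff, isNIndepSet_iff] at hJ
    obtain ⟨v, hv, rfl⟩ := exists_eq_insert_iff.2 ⟨hJ.2, by rw [hI.card_eq, hJ.1.2]⟩
    rw [coe_insert, isIndepSet_insert_of_notMem _ (mem_coe.not.2 hv)] at hJ
    exact ⟨v, (G.mem_freeVolume).2 ⟨hv, hJ.1.1.2⟩, rfl⟩

theorem succ_mul_indepCount_succ (k : ℕ) :
    (k + 1) * indepCount G (k + 1) = ∑ I ∈ G.indepSetFinset k, #(G.freeVolume I) :=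
  calc (k + 1) * indepCount G (k + 1)
      = ∑ J ∈ G.indepSetFinset (k + 1), #{I ∈ G.indepSetFinset k | I ⊆ J} := by
        rw [indepCount_eq_card_indepSetFinset, mul_comm, ← smul_eq_mul, ← sum_const]
        refine sum_congr rfl fun J hJ => ?_
        rw [mem_indepSetFinset_iff] at hJ
        rw [filter_indepSetFinset_subset G hJ.isIndepSet, card_powersetCard, hJ.card_eq,
          Nat.choose_succ_self_right]
    _ = ∑ I ∈ G.indepSetFinset k, #{J ∈ G.indepSetFinset (k + 1) | I ⊆ J} :=
        (sum_card_bipartiteAbove_eq_sum_card_bipartiteBelow _).symm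
    _ = ∑ I ∈ G.indepSetFinset k, #(G.freeVolume I) :=
        sum_congr rfl fun I hI =>
          G.card_filter_indepSetFinset_supset (mem_indepSetFinset_iff.1 hI)

theorem card_sub_mul_le_card_freeVolume {d : ℕ} (hG : G.IsRegularOfDegree d) (I : Finset V) :
    Fintype.card V - #I * (d + 1) ≤ #(G.freeVolume I) := by
  rw [card_freeVolume]
  refine Nat.sub_le_sub_left (card_biUnion_le_card_mul _ _ _ fun u _ => ?_) _
  rw [card_insert_of_notMem (G.notMem_neighborFinset_self u), card_neighborFinset_eq_degree,
    hG.degree_eq]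

theorem card_sub_mul_indepCount_le {d : ℕ} (hG : G.IsRegularOfDegree d) (k : ℕ) :
    (Fintype.card V - k * (d + 1)) * indepCount G k ≤ (k + 1) * indepCount G (k + 1) := by
  rw [succ_mul_indepCount_succ, indepCount_eq_card_indepSetFinset, mul_comm, ← smul_eq_mul]
  refine card_nsmul_le_sum _ _ _ fun I hI => ?_
  rw [← (mem_indepSetFinset_iff.1 hI).card_eq]
  exact G.card_sub_mul_le_card_freeVolume hG I

@[simp]
theorem CLgraph_adj {d m : ℕ} {u v : Fin m × Fin (d + 1)} :
    (CLgraph d m).Adj u v ↔ u.1 = v.1 ∧ u.2 ≠ v.2 :=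
  Iff.rfl

theorem insert_neighborFinset_CLgraph {d m : ℕ} (u : Fin m × Fin (d + 1)) :
    insert u ((CLgraph d m).neighborFinset u) = {u.1} ×ˢ univ := by
  ext w
  simp only [mem_insert, mem_neighborFinset, CLgraph_adj, mem_product, mem_singleton, mem_univ,
    and_true]
  grind

theorem card_freeVolume_CLgraph {d m : ℕ} {I : Finset (Fin m × Fin (d + 1))}
    (hI : (CLgraph d m).IsIndepSet I) :
    #((CLgraph d m).freeVolume I) = (m - #I) * (d + 1) := by
  rw [card_freeVolume, card_biUnion]
  · simp only [insert_neighborFinset_CLgraph, card_product, card_singleton, card_univ, one_mul,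
      sum_const, Fintype.card_prod, Fintype.card_fin, smul_eq_mul, Nat.sub_mul]
  · intro u hu v hv huv
    simp only [Function.onFun, insert_neighborFinset_CLgraph, disjoint_product, disjoint_singleton]
    exact .inl fun h => hI hu hv huv ⟨h, fun h' => huv (Prod.ext h h')⟩

theorem succ_mul_indepCount_CLgraph_succ (d m k : ℕ) :
    (k + 1) * indepCount (CLgraph d m) (k + 1) =
      (m - k) * (d + 1) * indepCount (CLgraph d m) k := by
  rw [succ_mul_indepCount_succ, indepCount_eq_card_indepSetFinset, mul_comm _ #_, ← smul_eq_mul,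
    ← sum_const]
  refine sum_congr rfl fun I hI => ?_
  rw [mem_indepSetFinset_iff] at hI
  rw [card_freeVolume_CLgraph hI.isIndepSet, hI.card_eq]

end SimpleGraph

theorem cutler_radcliffe_general (d : ℕ) (n : ℕ)
    {V : Type} [Fintype V] (G : SimpleGraph V)
    (hcard : Fintype.card V = n) (hreg : IsRegularGraph G d) :
    (∀ k : ℕ, 1 ≤ k → k ≤ n / (d + 1) →
        indepCount (CLgraph d (n / (d + 1))) (k + 1) * indepCount G k ≤
          indepCount G (k + 1) * indepCount (CLgraph d (n / (d + 1))) k) ∧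
      ∀ k : ℕ, indepCount (CLgraph d (n / (d + 1))) k ≤ indepCount G k := by
  set m := n / (d + 1)
  have hCL := SimpleGraph.succ_mul_indepCount_CLgraph_succ d m
  have hG (k : ℕ) : (m - k) * (d + 1) * indepCount G k ≤ (k + 1) * indepCount G (k + 1) :=
    calc (m - k) * (d + 1) * indepCount G k ≤ (n - k * (d + 1)) * indepCount G k := by
          rw [Nat.sub_mul]
          gcongr
          exact Nat.div_mul_le_self n (d + 1)
      _ ≤ (k + 1) * indepCount G (k + 1) :=
          hcard ▸ G.card_sub_mul_indepCount_le hreg.isRegularOfDegree k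
  refine ⟨fun k _ _ => mul_le_mul_of_succ_mul_eq_of_le_succ_mul hCL hG k,
    le_of_succ_mul_eq_of_le_succ_mul hCL hG ?_⟩
  rw [SimpleGraph.indepCount_zero, SimpleGraph.indepCount_zero]

/-- Cutler–Radcliffe: for `d ≥ 1`, `(d+1) ∣ n` and any `d`-regular graph
`G` on `n` vertices: (i) for `1 ≤ k ≤ n/(d+1)`,
`i_{k+1}(G)·i_k(CL_{d,n}) ≥ i_{k+1}(CL_{d,n})·i_k(G)`, and (ii) `i_k(G) ≥ i_k(CL_{d,n})`
for every `k ≥ 0`. -/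
theorem cutler_radcliffe (d : ℕ) (hd : 1 ≤ d) (n : ℕ) (hdvd : (d + 1) ∣ n)
    {V : Type} [Fintype V] [DecidableEq V] (G : SimpleGraph V)
    (hcard : Fintype.card V = n) (hreg : IsRegularGraph G d) :
    (∀ k : ℕ, 1 ≤ k → k ≤ n / (d + 1) →
        indepCount (CLgraph d (n / (d + 1))) (k + 1) * indepCount G k ≤
          indepCount G (k + 1) * indepCount (CLgraph d (n / (d + 1))) k) ∧
      ∀ k : ℕ, indepCount (CLgraph d (n / (d + 1))) k ≤ indepCount G k :=
  cutler_radcliffe_general d n G hcard hreg
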